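/- arXiv:2109.06364 — 3 statements merged into one kernel-verified Lean document; each statement's English description precedes it below -/
import Mathlib

section
/- Let X be a class I simple graph with no isolated vertices and let TR(X) be any generalized truncation of X. If the maximum degree of TR(X) equals the maximum degree of X, then TR(X) is class I. -/
open SimpleGraph

/-- A proper edge coloring of a simple graph: distinct edges sharing a vertex
receive distinct colors. -/
def IsProperEdgeColoring {V α : Type*} (G : SimpleGraph V) (C : Sym2 V → α) : Prop :=
  ∀ e₁ ∈ G.edgeSet, ∀ e₂ ∈ G.edgeSet, e₁ ≠ e₂ → (∃ v, v ∈ e₁ ∧ v ∈ e₂) → C e₁ ≠ C e₂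

/-- The chromatic index: least number of colors admitting a proper edge coloring. -/
noncomputable def chromIndex {V : Type*} (G : SimpleGraph V) : ℕ :=
  sInf {k | ∃ C : Sym2 V → Fin k, IsProperEdgeColoring G C}

/-- Degree of a vertex. -/
noncomputable def deg {V : Type*} (G : SimpleGraph V) (v : V) : ℕ :=
  (G.neighborSet v).ncard

/-- Maximum degree. -/
noncomputable def maxDeg {V : Type*} (G : SimpleGraph V) : ℕ :=
  sSup (Set.range (deg G))

/-- A graph is class I if its chromatic index equals its maximum degree. -/
def ClassI {V : Type*} (G : SimpleGraph V) : Prop := chromIndex G = maxDeg G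

/-- The sun over `G`: attach one pendant edge at each vertex of `G`. -/
def sun {V : Type*} (G : SimpleGraph V) : SimpleGraph (V ⊕ V) :=
  SimpleGraph.fromRel (fun x y =>
    (∃ u v, G.Adj u v ∧ x = Sum.inl u ∧ y = Sum.inl v) ∨
    (∃ v, x = Sum.inl v ∧ y = Sum.inr v))

/-- The pendant edge of the sun attached at vertex `v`. -/
def pendant {V : Type*} (v : V) : Sym2 (V ⊕ V) := s(Sum.inl v, Sum.inr v)

/-- The generalized truncation of `X` determined by the graph `H` on the darts of `X`:
each dart is joined to its reverse dart (the matching `M_F`) and the edges of `H`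
(the constituent edges) are added. -/
def trunc {V : Type*} (X : SimpleGraph V) (H : SimpleGraph X.Dart) : SimpleGraph X.Dart :=
  SimpleGraph.fromRel (fun d d' => d' = d.symm ∨ H.Adj d d')

/-- The constituent graph `H` respects clusters: its edges join only darts with the
same initial vertex. -/
def RespectsClusters {V : Type*} (X : SimpleGraph V) (H : SimpleGraph X.Dart) : Prop :=
  ∀ d d' : X.Dart, H.Adj d d' → d.toProd.1 = d'.toProd.1

/-- The cluster at `v`: darts with initial vertex `v`. -/
def cluster {V : Type*} (X : SimpleGraph V) (v : V) : Set X.Dart :=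
  {d : X.Dart | d.toProd.1 = v}

/-- The constituent at `v`, as a graph in its own right. -/
def constituent {V : Type*} (X : SimpleGraph V) (H : SimpleGraph X.Dart) (v : V) :
    SimpleGraph (cluster X v) := H.induce (cluster X v)

/-- The complete truncation: every constituent is the complete graph on its cluster. -/
def completeTrunc {V : Type*} (X : SimpleGraph V) : SimpleGraph X.Dart :=
  trunc X (SimpleGraph.fromRel (fun d d' => d.toProd.1 = d'.toProd.1))

/-- `X` has no isolated vertices. -/
def NoIsolated {V : Type*} (X : SimpleGraph V) : Prop := ∀ v : V, ∃ w, X.Adj v w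

/-- The number of edges of `X` of color `k` incident with `v`. -/
noncomputable def colorCountAt {V α : Type*} (X : SimpleGraph V) (c : Sym2 V → α)
    (v : V) (k : α) : ℕ :=
  {e | e ∈ X.edgeSet ∧ v ∈ e ∧ c e = k}.ncard

/-- An edge coloring (not necessarily proper) is parity-balanced if for every vertex `v`
and every color `k`, the number of edges of color `k` incident with `v` has the same
parity as the degree of `v`. -/
def ParityBalanced {V : Type*} {m : ℕ} (X : SimpleGraph V) (c : Sym2 V → Fin m) : Prop :=
  ∀ (v : V) (k : Fin m), colorCountAt X c v k % 2 = deg X v % 2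

/-- The edges of the sun centered at the constituent at `v`: the constituent edges
at `v` together with the matching edges incident with the cluster at `v`. -/
def sunEdges {V : Type*} (X : SimpleGraph V) (H : SimpleGraph X.Dart) (v : V) :
    Set (Sym2 X.Dart) :=
  {e | e ∈ (trunc X H).edgeSet ∧ ∃ d : X.Dart, d ∈ e ∧ d.toProd.1 = v}

/-- `H` describes a cyclic truncation of `X`: it respects clusters and every
constituent is a cycle on its cluster. -/
def CyclicConstituents {V : Type*} (X : SimpleGraph V) (H : SimpleGraph X.Dart) : Prop :=
  RespectsClusters X H ∧ (∀ d : X.Dart, deg H d = 2) ∧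
    ∀ v : V, (constituent X H v).Connected


section Stmt5Aux

open SimpleGraph

private lemma proper_of_injective' {V α : Type*} (G : SimpleGraph V) {C : Sym2 V → α}
    (h : Function.Injective C) : IsProperEdgeColoring G C :=
  fun e₁ _ e₂ _ hne _ hC => hne (h hC)

private lemma chrom_set_nonempty {V : Type*} [Fintype V] (G : SimpleGraph V) :
    {k | ∃ C : Sym2 V → Fin k, IsProperEdgeColoring G C}.Nonempty := by
  classical
  exact ⟨Fintype.card (Sym2 V), fun e => Fintype.equivFin (Sym2 V) e,
    proper_of_injective' G (Fintype.equivFin (Sym2 V)).injective⟩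

private lemma maxDeg_le_colors {V : Type*} (G : SimpleGraph V) {k : ℕ}
    (C : Sym2 V → Fin k) (hC : IsProperEdgeColoring G C) : maxDeg G ≤ k := by
  apply csSup_le'
  rintro _ ⟨v, rfl⟩
  have hinj : Set.InjOn (fun w => C s(v, w)) (G.neighborSet v) := by
    intro a ha b hb hab
    by_contra hne
    have hedges : (s(v, a) : Sym2 V) ≠ s(v, b) := fun h => hne (Sym2.congr_right.mp h)
    exact hC s(v, a) (G.mem_edgeSet.mpr ha) s(v, b) (G.mem_edgeSet.mpr hb) hedges
      ⟨v, Sym2.mem_mk_left v a, Sym2.mem_mk_left v b⟩ hab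
  calc deg G v ≤ (Set.univ : Set (Fin k)).ncard :=
        Set.ncard_le_ncard_of_injOn _ (fun _ _ => Set.mem_univ _) hinj Set.finite_univ
    _ = k := by simp [Set.ncard_univ]

private lemma trunc_adj' {V : Type*} (X : SimpleGraph V) (H : SimpleGraph X.Dart)
    (d d' : X.Dart) : (trunc X H).Adj d d' ↔ d ≠ d' ∧ (d' = d.symm ∨ H.Adj d d') := by
  unfold trunc
  rw [SimpleGraph.fromRel_adj]
  constructor
  · rintro ⟨hne, (h | h) | (h | h)⟩
    · exact ⟨hne, Or.inl h⟩
    · exact ⟨hne, Or.inr h⟩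
    · exact ⟨hne, Or.inl (by rw [h, SimpleGraph.Dart.symm_symm])⟩
    · exact ⟨hne, Or.inr h.symm⟩
  · rintro ⟨hne, h | h⟩
    · exact ⟨hne, Or.inl (Or.inl h)⟩
    · exact ⟨hne, Or.inl (Or.inr h)⟩

end Stmt5Aux

/-- a generalized truncation of a class I graph with the same maximum
degree is class I. -/
theorem stmt5 {V : Type*} [Fintype V] (X : SimpleGraph V) (hX : NoIsolated X)
    (hX1 : ClassI X) (H : SimpleGraph X.Dart) (hH : RespectsClusters X H)
    (hmax : maxDeg (trunc X H) = maxDeg X) : ClassI (trunc X H) := by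
  classical
  set Δ := maxDeg X with hΔdef
  have hmemX : Δ ∈ {k | ∃ C : Sym2 V → Fin k, IsProperEdgeColoring X C} := by
    have h := Nat.sInf_mem (chrom_set_nonempty X)
    have h2 : chromIndex X = Δ := hX1
    rw [chromIndex] at h2
    rwa [h2] at h
  obtain ⟨c, hc⟩ := hmemX
  unfold ClassI
  rw [hmax]
  rcases Nat.eq_zero_or_pos Δ with h0 | hpos
  · -- degenerate case : no vertices at all
    have hV : IsEmpty V := by
      constructor
      intro v
      obtain ⟨w, hw⟩ := hX v
      have h1 : 0 < deg X v := by
        rw [deg]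
        exact (Set.ncard_pos (Set.toFinite _)).mpr ⟨w, hw⟩
      have h2 : deg X v ≤ Δ := by
        refine le_csSup ?_ ⟨v, rfl⟩
        exact (Set.finite_range _).bddAbove
      omega
    have hD : IsEmpty X.Dart := ⟨fun d => hV.false d.toProd.1⟩
    have hC0 : ∃ C : Sym2 X.Dart → Fin 0, IsProperEdgeColoring (trunc X H) C := by
      refine ⟨Sym2.lift ⟨fun a _ => (isEmptyElim a : Fin 0), fun a _ => isEmptyElim a⟩, ?_⟩
      intro e₁ _ _ _ _ _
      exact isEmptyElim (Sym2.lift ⟨fun a _ => (isEmptyElim a : Fin 0), fun a _ => isEmptyElim a⟩ e₁)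
    have : chromIndex (trunc X H) = 0 := Nat.eq_zero_of_le_zero (Nat.sInf_le hC0)
    rw [this, h0]
  · have : NeZero Δ := ⟨hpos.ne'⟩
    -- the label of a dart : the color of its underlying edge, viewed in ZMod Δ
    set ℓ : X.Dart → ZMod Δ := fun d => (((c d.edge : Fin Δ) : ℕ) : ZMod Δ) with hℓdef
    have hℓinj : ∀ d d' : X.Dart, c d.edge ≠ c d'.edge → ℓ d ≠ ℓ d' := by
      intro d d' hne heq
      apply hne
      have := congrArg ZMod.val heq
      rw [hℓdef] at this
      simp only at this
      rw [ZMod.val_cast_of_lt (c d.edge).isLt, ZMod.val_cast_of_lt (c d'.edge).isLt] at this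
      exact Fin.ext this
    have hℓsymm : ∀ d : X.Dart, ℓ d.symm = ℓ d := by
      intro d
      simp [hℓdef, SimpleGraph.Dart.edge_symm]
    -- darts with the same initial vertex get distinct labels
    have hcl : ∀ d d' : X.Dart, d ≠ d' → d.toProd.1 = d'.toProd.1 → ℓ d ≠ ℓ d' := by
      intro d d' hne hfst
      apply hℓinj
      have hedge : d.edge ≠ d'.edge := by
        intro h
        rcases (SimpleGraph.dart_edge_eq_iff d d').mp h with h1 | h1
        · exact hne h1
        · have h2 : d.toProd.1 = d'.toProd.2 := by rw [h1]; rfl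
          have h3 : d'.toProd.1 = d'.toProd.2 := hfst.symm.trans h2
          exact X.irrefl (h3 ▸ d'.adj)
      have hv1 : d.toProd.1 ∈ d.edge := Sym2.mem_mk_left _ _
      have hv2 : d.toProd.1 ∈ d'.edge := hfst ▸ (Sym2.mem_mk_left d'.toProd.1 d'.toProd.2)
      exact hc d.edge d.edge_mem d'.edge d'.edge_mem hedge ⟨d.toProd.1, hv1, hv2⟩
    -- the coloring of the truncation
    set F : Sym2 X.Dart → ZMod Δ := Sym2.lift ⟨fun a b => ℓ a + ℓ b, fun a b => add_comm _ _⟩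
      with hFdef
    set C : Sym2 X.Dart → Fin Δ := fun e => ⟨(F e).val, ZMod.val_lt _⟩ with hCdef
    have hproper : IsProperEdgeColoring (trunc X H) C := by
      intro e₁ he₁ e₂ he₂ hne hshare
      obtain ⟨x, hx₁, hx₂⟩ := hshare
      obtain ⟨y₁, rfl⟩ := Sym2.mem_iff_exists.mp hx₁
      obtain ⟨y₂, rfl⟩ := Sym2.mem_iff_exists.mp hx₂
      rw [SimpleGraph.mem_edgeSet, trunc_adj'] at he₁ he₂
      have hy : y₁ ≠ y₂ := fun h => hne (by rw [h])
      have key : ℓ y₁ ≠ ℓ y₂ := by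
        rcases he₁.2 with h1 | h1 <;> rcases he₂.2 with h2 | h2
        · exact absurd (h1.trans h2.symm) hy
        · rw [h1, hℓsymm]
          exact hcl x y₂ h2.ne (hH x y₂ h2)
        · rw [h2, hℓsymm]
          exact fun h => (hcl x y₁ h1.ne (hH x y₁ h1)) h.symm
        · exact hcl y₁ y₂ hy ((hH x y₁ h1).symm.trans (hH x y₂ h2))
      intro hCC
      apply key
      have hval : (F s(x, y₁)).val = (F s(x, y₂)).val := by
        rw [hCdef] at hCC
        exact congrArg Fin.val hCC
      have hF : F s(x, y₁) = F s(x, y₂) := ZMod.val_injective Δ hval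
      rw [hFdef] at hF
      simp only [Sym2.lift_mk] at hF
      exact add_left_cancel hF
    have hmemT : Δ ∈ {k | ∃ C : Sym2 X.Dart → Fin k, IsProperEdgeColoring (trunc X H) C} :=
      ⟨C, hproper⟩
    have hub : chromIndex (trunc X H) ≤ Δ := Nat.sInf_le hmemT
    have hlb : Δ ≤ chromIndex (trunc X H) := by
      rw [← hmax]
      refine le_csInf ⟨Δ, hmemT⟩ ?_
      rintro k ⟨C', hC'⟩
      exact maxDeg_le_colors _ C' hC'
    omega
end

section
/- Let X be a d-regular simple graph with d odd. Then X is class I (i.e., χ'(X) = d) if and only if the complete truncation of X is class I (i.e., has chromatic index d). -/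
/-!
An edge of the complete truncation either lies in a cluster (a copy of `K_d`) or is the
matching edge `{z, z.symm}`, and `z ↦ c z.edge` is injective on each cluster whenever `c`
properly colors `X`. Coloring every edge `{x, y}` of the complete truncation by
`c x.edge + c y.edge` in the group `Fin d` is then proper: at a dart `z` the colors of its
`d` edges are `c z.edge` plus the pairwise distinct values of `c` at the edges through the
initial vertex of `z`.

Conversely, in a proper `d`-coloring of the `d`-regular complete truncation every color `k`
appears at every dart. If no matching edge at the cluster of `v` had color `k`, the edges of
color `k` would pair up the `d` darts of that cluster, which is impossible for `d` odd. So the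
matching edges at each cluster carry all `d` colors exactly once, i.e. they define a proper
`d`-coloring of `X`.
-/

open SimpleGraph

open Function

lemma Set.even_ncard_of_involutive {α : Type*} {S : Set α} (hS : S.Finite) (g : S → S)
    (hg : Involutive g) (hfix : ∀ z, g z ≠ z) : Even S.ncard := by
  classical
  have := hS.fintype
  have hmod := Equiv.Perm.card_fixedPoints_modEq (f := (g : Function.End S)) (p := 2) (n := 1)
    (funext hg)
  have hempty : Fintype.card (Function.fixedPoints (g : Function.End S)) = 0 :=
    Fintype.card_eq_zero_iff.mpr ⟨fun z => hfix z.1 z.2⟩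
  rw [hempty, Nat.modEq_zero_iff_dvd] at hmod
  rw [← Nat.card_coe_set_eq, Nat.card_eq_fintype_card]
  exact even_iff_two_dvd.mpr hmod

section EdgeColoring

variable {W α : Type*} {G : SimpleGraph W} {C : Sym2 W → α}

lemma chromIndex_of_isEmpty [IsEmpty W] (G : SimpleGraph W) : chromIndex G = 0 :=
  Nat.eq_zero_of_le_zero (Nat.sInf_le ⟨isEmptyElim, fun e => isEmptyElim e⟩)

lemma IsProperEdgeColoring.injOn_neighborSet (hC : IsProperEdgeColoring G C) (z : W) :
    Set.InjOn (fun y => C s(z, y)) (G.neighborSet z) := by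
  intro y₁ h₁ y₂ h₂ hc
  by_contra hne
  exact hC _ h₁ _ h₂ (fun he => hne (Sym2.congr_right.mp he))
    ⟨z, Sym2.mem_mk_left _ _, Sym2.mem_mk_left _ _⟩ hc

lemma IsProperEdgeColoring.deg_le {k : ℕ} {C : Sym2 W → Fin k} (hC : IsProperEdgeColoring G C)
    (v : W) : deg G v ≤ k := by
  simpa [deg] using
    Set.ncard_le_ncard_of_injOn _ (fun _ _ => Set.mem_univ _) (hC.injOn_neighborSet v)

lemma IsProperEdgeColoring.exists_adj_color_eq [Finite W] {d : ℕ} {C : Sym2 W → Fin d}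
    (hC : IsProperEdgeColoring G C) {z : W} (hz : deg G z = d) (k : Fin d) :
    ∃ y, G.Adj z y ∧ C s(z, y) = k := by
  obtain ⟨y, hy, hk⟩ := Set.surj_on_of_inj_on_of_ncard_le (t := Set.univ) (fun y _ => C s(z, y))
    (fun _ _ => Set.mem_univ _) (fun _ _ h₁ h₂ h => hC.injOn_neighborSet z h₁ h₂ h)
    (by simpa [deg] using hz.ge) (Set.toFinite _) k (Set.mem_univ k)
  exact ⟨y, hy, hk.symm⟩

lemma chromIndex_eq_iff {d : ℕ} (hd : 0 < d) {v : W} (hv : deg G v = d) :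
    chromIndex G = d ↔ ∃ C : Sym2 W → Fin d, IsProperEdgeColoring G C := by
  constructor
  · intro h
    exact h ▸ Nat.sInf_mem (Nat.nonempty_of_pos_sInf (h ▸ hd))
  · rintro ⟨C, hC⟩
    refine le_antisymm (Nat.sInf_le ⟨C, hC⟩) (le_csInf ⟨d, C, hC⟩ ?_)
    rintro k ⟨C', hC'⟩
    exact hv ▸ hC'.deg_le v

lemma isProperEdgeColoring_lift_add {M : Type*} [AddCommMonoid M] [IsLeftCancelAdd M]
    (a : W → M) (ha : ∀ z, Set.InjOn a (G.neighborSet z)) :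
    IsProperEdgeColoring G (Sym2.lift ⟨fun x y => a x + a y, fun _ _ => add_comm _ _⟩) := by
  rintro e₁ he₁ e₂ he₂ hne ⟨z, hz₁, hz₂⟩ hc
  obtain ⟨x, rfl⟩ := Sym2.mem_iff_exists.mp hz₁
  obtain ⟨y, rfl⟩ := Sym2.mem_iff_exists.mp hz₂
  exact hne (congrArg _ (ha z he₁ he₂ (add_left_cancel hc)))

lemma IsProperEdgeColoring.exists_adj_notMem_of_odd (hC : IsProperEdgeColoring G C) (k : α)
    {S : Set W} (hS : Odd S.ncard) (hcov : ∀ z ∈ S, ∃ y, G.Adj z y ∧ C s(z, y) = k) :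
    ∃ z ∈ S, ∃ y ∉ S, G.Adj z y ∧ C s(z, y) = k := by
  by_contra! hin
  choose g hadj hg using hcov
  have hgS : ∀ z (hz : z ∈ S), g z hz ∈ S := fun z hz => by
    by_contra hout
    exact hin z hz _ hout (hadj z hz) (hg z hz)
  let g' : S → S := fun z => ⟨g z z.2, hgS z z.2⟩
  have hinv : Involutive g' := fun z => Subtype.ext <| by
    refine hC.injOn_neighborSet (g z z.2) (hadj _ (hgS z z.2)) (hadj z z.2).symm ?_
    dsimp only
    rw [hg, Sym2.eq_swap, hg]
  refine Nat.not_even_iff_odd.mpr hS <|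
    Set.even_ncard_of_involutive (Set.finite_of_ncard_pos hS.pos) g' hinv fun z h => ?_
  exact G.ne_of_adj (hadj z z.2) (congrArg Subtype.val h).symm

end EdgeColoring

section Darts

variable {V : Type*} (X : SimpleGraph V)

instance SimpleGraph.Dart.finite [Finite V] : Finite X.Dart :=
  Finite.of_injective _ Dart.toProd_injective

lemma exists_lift_dart_edge {α : Type*} [Nonempty α] (f : X.Dart → α)
    (hf : ∀ z, f z.symm = f z) : ∃ c : Sym2 V → α, ∀ z, c z.edge = f z := by
  refine ⟨extend Dart.edge f fun _ => Classical.arbitrary α, fun z => ?_⟩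
  refine FactorsThrough.extend_apply (fun z₁ z₂ h => ?_) _ z
  rcases (dart_edge_eq_iff z₁ z₂).mp h with rfl | rfl
  exacts [rfl, hf z₂]

lemma isProperEdgeColoring_iff_injOn_cluster {α : Type*} (c : Sym2 V → α) :
    IsProperEdgeColoring X c ↔ ∀ v, Set.InjOn (fun z : X.Dart => c z.edge) (cluster X v) := by
  constructor
  · rintro hc v z₁ rfl z₂ h₂ heq
    by_contra hne
    refine hc _ z₁.edge_mem _ z₂.edge_mem (fun he => ?_)
      ⟨z₁.fst, Sym2.mem_mk_left _ _, h₂ ▸ Sym2.mem_mk_left _ _⟩ heq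
    rcases (dart_edge_eq_iff z₁ z₂).mp he with h | h
    · exact hne h
    · exact z₂.fst_ne_snd ((show z₂.fst = z₁.fst from h₂).trans (congrArg (·.fst) h))
  · rintro hinj e₁ he₁ e₂ he₂ hne ⟨v, hv₁, hv₂⟩ hc
    obtain ⟨w₁, rfl⟩ := Sym2.mem_iff_exists.mp hv₁
    obtain ⟨w₂, rfl⟩ := Sym2.mem_iff_exists.mp hv₂
    let z₁ : X.Dart := ⟨(v, w₁), he₁⟩
    let z₂ : X.Dart := ⟨(v, w₂), he₂⟩
    exact hne (congrArg Dart.edge (hinj v (show z₁.fst = v from rfl) rfl hc : z₁ = z₂))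

lemma ncard_cluster (v : V) : (cluster X v).ncard = deg X v := by
  have hrange : cluster X v = Set.range (X.dartOfNeighborSet v) := by
    ext z
    constructor
    · rintro rfl
      exact ⟨⟨z.snd, z.adj⟩, rfl⟩
    · rintro ⟨w, rfl⟩
      rfl
  rw [hrange, Set.ncard_range_of_injective (X.dartOfNeighborSet_injective v), Nat.card_coe_set_eq,
    deg]

lemma completeTrunc_adj {x y : X.Dart} :
    (completeTrunc X).Adj x y ↔ x ≠ y ∧ (y = x.symm ∨ x.fst = y.fst) := by
  have hsymm : x = y.symm ↔ y = x.symm := by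
    constructor <;> rintro rfl <;> simp
  simp only [completeTrunc, trunc, fromRel_adj, hsymm]
  grind

lemma completeTrunc_neighborSet (z : X.Dart) :
    (completeTrunc X).neighborSet z = insert z.symm (cluster X z.fst \ {z}) := by
  ext y
  simp only [mem_neighborSet, completeTrunc_adj, Set.mem_insert_iff, Set.mem_sdiff, cluster,
    Set.mem_ofPred_eq, Set.mem_singleton_iff]
  constructor
  · rintro ⟨hne, h | h⟩
    exacts [.inl h, .inr ⟨h.symm, Ne.symm hne⟩]
  · rintro (rfl | ⟨h, hne⟩)
    exacts [⟨z.symm_ne.symm, .inl rfl⟩, ⟨Ne.symm hne, .inr h.symm⟩]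

lemma symm_notMem_cluster (z : X.Dart) : z.symm ∉ cluster X z.fst := z.snd_ne_fst

lemma deg_completeTrunc [Finite V] (z : X.Dart) : deg (completeTrunc X) z = deg X z.fst := by
  rw [deg, completeTrunc_neighborSet,
    Set.ncard_insert_of_notMem fun h => symm_notMem_cluster X z h.1,
    Set.ncard_sdiff_singleton_add_one (show z ∈ cluster X z.fst from rfl), ncard_cluster]

end Darts

section CompleteTruncation

variable {V : Type*} (X : SimpleGraph V)

lemma IsProperEdgeColoring.completeTrunc_add {M : Type*} [AddCommMonoid M] [IsLeftCancelAdd M]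
    {c : Sym2 V → M} (hc : IsProperEdgeColoring X c) :
    IsProperEdgeColoring (completeTrunc X)
      (Sym2.lift ⟨fun x y => c x.edge + c y.edge, fun _ _ => add_comm _ _⟩) := by
  refine isProperEdgeColoring_lift_add _ fun z => ?_
  have hinj := (isProperEdgeColoring_iff_injOn_cluster X c).mp hc z.fst
  rw [completeTrunc_neighborSet, Set.injOn_insert fun h => symm_notMem_cluster X z h.1]
  refine ⟨hinj.mono Set.sdiff_subset, ?_⟩
  rintro ⟨y, ⟨hy, hyz⟩, heq⟩
  exact hyz (hinj hy rfl (heq.trans (congrArg c z.edge_symm)))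

lemma injOn_cluster_matching_color [Finite V] {d : ℕ} (hd : Odd d) (hreg : ∀ v, deg X v = d)
    {C : Sym2 X.Dart → Fin d} (hC : IsProperEdgeColoring (completeTrunc X) C) (v : V) :
    Set.InjOn (fun z : X.Dart => C s(z, z.symm)) (cluster X v) := by
  have hsurj : ∀ k, ∃ z, ∃ _ : z ∈ cluster X v, C s(z, z.symm) = k := by
    intro k
    have hcov (z : X.Dart) (_ : z ∈ cluster X v) :=
      hC.exists_adj_color_eq ((deg_completeTrunc X z).trans (hreg _)) k
    obtain ⟨z, hz, y, hy, hadj, hk⟩ :=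
      hC.exists_adj_notMem_of_odd k (by rwa [ncard_cluster, hreg]) hcov
    refine ⟨z, hz, ?_⟩
    rcases ((completeTrunc_adj X).mp hadj).2 with rfl | h
    exacts [hk, absurd (h.symm.trans hz) hy]
  intro z₁ h₁ z₂ h₂ heq
  exact Set.inj_on_of_surj_on_of_ncard_le (t := Set.univ) (fun z _ => C s(z, z.symm))
    (fun _ _ => Set.mem_univ _) (fun k _ => hsurj k) (by simp [ncard_cluster, hreg]) h₁ h₂ heq

lemma exists_isProperEdgeColoring_of_completeTrunc [Finite V] {d : ℕ} (hd : Odd d)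
    (hreg : ∀ v, deg X v = d) {C : Sym2 X.Dart → Fin d}
    (hC : IsProperEdgeColoring (completeTrunc X) C) :
    ∃ c : Sym2 V → Fin d, IsProperEdgeColoring X c := by
  have : NeZero d := ⟨hd.pos.ne'⟩
  obtain ⟨c, hc⟩ := exists_lift_dart_edge X (fun z => C s(z, z.symm))
    fun z => by rw [Dart.symm_symm, Sym2.eq_swap]
  refine ⟨c, (isProperEdgeColoring_iff_injOn_cluster X c).mpr fun v => ?_⟩
  simpa only [hc] using injOn_cluster_matching_color X hd hreg hC v

end CompleteTruncation

/-- a `d`-regular graph with `d` odd is class I iff its complete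
truncation is class I. -/
theorem stmt6 {V : Type*} [Fintype V] (X : SimpleGraph V) (d : ℕ) (hd : Odd d)
    (hreg : ∀ v, deg X v = d) :
    chromIndex X = d ↔ chromIndex (completeTrunc X) = d := by
  rcases isEmpty_or_nonempty V with hV | hV
  · have : IsEmpty X.Dart := ⟨fun z => isEmptyElim z.fst⟩
    rw [chromIndex_of_isEmpty X, chromIndex_of_isEmpty (completeTrunc X)]
  obtain ⟨v⟩ := hV
  have : NeZero d := ⟨hd.pos.ne'⟩
  obtain ⟨w, hvw⟩ : (X.neighborSet v).Nonempty :=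
    Set.nonempty_of_ncard_ne_zero ((hreg v).trans_ne (NeZero.ne d))
  let z : X.Dart := ⟨(v, w), hvw⟩
  rw [chromIndex_eq_iff hd.pos (hreg v),
    chromIndex_eq_iff hd.pos ((deg_completeTrunc X z).trans (hreg v))]
  exact ⟨fun ⟨_, hc⟩ => ⟨_, hc.completeTrunc_add X⟩,
    fun ⟨_, hC⟩ => exists_isProperEdgeColoring_of_completeTrunc X hd hreg hC⟩
end

section
/- Let TR(X) be a generalized truncation of a simple graph X with no isolated vertices, and let Δ be the maximum degree of TR(X). If every constituent graph con(v) that contains a vertex whose degree in TR(X) equals Δ is class I (as a graph in its own right), then TR(X) is class I. -/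
open SimpleGraph

/-! Give every matching edge of `TR(X)` the new color `Δ`; it then suffices to color each
constituent properly with `Δ - 1` colors, since each dart lies on exactly one matching edge.
A constituent containing a dart of degree `Δ` has maximum degree `Δ - 1` and is class I by
hypothesis. In every other constituent all degrees are at most `Δ - 2`, and Vizing's theorem
supplies the `Δ - 1` colors.

Vizing's theorem is proved by the fan argument: to color an uncolored edge `x y₀`, take a
maximal fan `y₀, …, y_k` at `x` and a color `β` missing at `y_k`. If `β` is also missing at
`x`, the fan is rotated. Otherwise, by maximality, the `β`-edge at `x` is `x y_{i+1}` for some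
`i < k`, so `β` is missing at `y_i`. Let `α` be missing at `x`. Every vertex meets at most two
`αβ`-edges, so an `αβ`-Kempe chain has at most two vertices meeting fewer than two of them;
hence `x`, `y_i` and `y_k`, which each meet at most one, do not all lie on one chain.
Interchanging `α` and `β` on the chain through `y_i` or through `y_k` makes `α` missing at the
end of the fan `y₀, …, y_i` or `y₀, …, y_k`, which is then rotated.
-/

open Finset

namespace SimpleGraph

variable {V : Type*} {G : SimpleGraph V}

lemma deg_eq_degree (G : SimpleGraph V) (v : V) [Fintype (G.neighborSet v)] :
    deg G v = G.degree v := by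
  rw [deg, Set.ncard_eq_toFinset_card', ← card_neighborSet_eq_degree, Set.toFinset_card]

lemma Connected.ncard_deg_le_one_le_two [Finite V] (hG : G.Connected)
    (h2 : ∀ v, deg G v ≤ 2) : {v | deg G v ≤ 1}.ncard ≤ 2 := by
  classical
  have := Fintype.ofFinite V
  have hsum : ∑ v, G.degree v = 2 * #G.edgeFinset := G.sum_degrees_eq_twice_card_edges
  have hedges : Fintype.card V ≤ #G.edgeFinset + 1 := by
    have := hG.card_vert_le_card_edgeSet_add_one
    rwa [Nat.card_eq_fintype_card, Nat.card_eq_fintype_card, ← edgeFinset_card] at this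
  have hbound : ∑ v, G.degree v + #{v | G.degree v ≤ 1} ≤ 2 * Fintype.card V := by
    rw [Finset.card_filter, ← Finset.sum_add_distrib, ← Finset.card_univ, mul_comm,
      ← smul_eq_mul, ← Finset.sum_const]
    refine Finset.sum_le_sum fun v _ => ?_
    have := deg_eq_degree G v ▸ h2 v
    split_ifs <;> omega
  have hcard : {v | deg G v ≤ 1}.ncard = #{v | G.degree v ≤ 1} := by
    rw [← Set.ncard_coe_finset]
    congr 1
    ext v
    simp [deg_eq_degree]
  omega

lemma deg_induce_of_neighborSet_subset {s : Set V} (v : s) (h : G.neighborSet v ⊆ s) :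
    deg (G.induce s) v = deg G v := by
  rw [deg, deg, ← Set.ncard_image_of_injective _ Subtype.val_injective]
  congr 1
  ext w
  constructor
  · rintro ⟨w, hw, rfl⟩
    exact hw
  · intro hw
    exact ⟨⟨w, h hw⟩, hw, rfl⟩

lemma ConnectedComponent.deg_toSimpleGraph (C : G.ConnectedComponent) (v : C) :
    deg C.toSimpleGraph v = deg G v :=
  deg_induce_of_neighborSet_subset v fun _ hw => (C.mem_supp_congr_adj hw).1 v.2

lemma not_reachable_of_deg_le_one [Finite V] (h2 : ∀ v, deg G v ≤ 2) {u v w : V}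
    (huv : u ≠ v) (huw : u ≠ w) (hvw : v ≠ w)
    (hu : deg G u ≤ 1) (hv : deg G v ≤ 1) (hw : deg G w ≤ 1) (hreach : G.Reachable u v) :
    ¬ G.Reachable u w := by
  intro hreach'
  set C := G.connectedComponentMk u
  have hmem : ∀ {p}, G.Reachable u p → p ∈ C.supp :=
    fun h => (ConnectedComponent.sound h).symm
  have hle := C.connected_toSimpleGraph.ncard_deg_le_one_le_two
    fun p => (C.deg_toSimpleGraph p).trans_le (h2 p)
  have hsub : {⟨u, hmem (Reachable.refl u)⟩, ⟨v, hmem hreach⟩, ⟨w, hmem hreach'⟩} ⊆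
      {p : C | deg C.toSimpleGraph p ≤ 1} := by
    simp only [Set.insert_subset_iff, Set.singleton_subset_iff, Set.mem_ofPred_eq,
      C.deg_toSimpleGraph]
    exact ⟨hu, hv, hw⟩
  have := (Set.ncard_le_ncard hsub).trans hle
  rw [Set.ncard_insert_of_notMem (by simp [huv, huw]), Set.ncard_pair (by simp [hvw])] at this
  omega

end SimpleGraph

namespace Vizing

open Function

variable {W : Type*} {n : ℕ}

/-- A proper coloring of some of the edges of `G`; `c e = none` means that `e` is uncolored. -/
structure IsPartialEdgeColoring (G : SimpleGraph W) (c : Sym2 W → Option (Fin n)) : Prop where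
  mem_edgeSet {e : Sym2 W} {a : Fin n} : c e = some a → e ∈ G.edgeSet
  eq_of_eq_some {u v w : W} {a : Fin n} : c s(u, v) = some a → c s(u, w) = some a → v = w

def Missing (c : Sym2 W → Option (Fin n)) (u : W) (a : Fin n) : Prop :=
  ∀ v, c s(u, v) ≠ some a

/-- The edge `e` can be colored, at the price of recoloring but not uncoloring other edges. -/
def CanColor (G : SimpleGraph W) (c : Sym2 W → Option (Fin n)) (e : Sym2 W) : Prop :=
  ∃ c' : Sym2 W → Option (Fin n), IsPartialEdgeColoring G c' ∧ c' e ≠ none ∧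
    ∀ e', c e' ≠ none → c' e' ≠ none

variable {G : SimpleGraph W} {c : Sym2 W → Option (Fin n)} {u v x y : W} {a b d α β : Fin n}
  {f : ℕ → W} {k m : ℕ}

lemma IsPartialEdgeColoring.adj (hc : IsPartialEdgeColoring G c) (h : c s(u, v) = some a) :
    G.Adj u v :=
  hc.mem_edgeSet h

lemma Missing.ne (h : Missing c u a) (hv : c s(u, v) = some b) : b ≠ a := by
  rintro rfl
  exact h v hv

lemma exists_missing [Finite W] (hc : IsPartialEdgeColoring G c) (hu : deg G u < n) :
    ∃ a, Missing c u a := by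
  by_contra! h
  choose g hg using fun a => by simpa [Missing] using h a
  have hinj : Injective fun a => (⟨g a, hc.adj (hg a)⟩ : G.neighborSet u) := by
    intro a a' haa'
    have h := hg a
    rw [show g a = g a' from congrArg Subtype.val haa', hg a'] at h
    exact (Option.some_injective _ h).symm
  have := Nat.card_le_card_of_injective _ hinj
  rw [Nat.card_eq_fintype_card, Fintype.card_fin, Nat.card_coe_set_eq] at this
  exact (hu.trans_le this).false

section Update

variable [DecidableEq W] {e e' : Sym2 W}

lemma eq_some_of_update_none (h : update c e none e' = some a) : c e' = some a := by
  rcases eq_or_ne e' e with rfl | hne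
  · simp at h
  · rwa [update_of_ne hne] at h

lemma update_some_ne_none (h : c e' ≠ none) : update c e (some a) e' ≠ none := by
  rw [update_apply]
  split_ifs <;> simp [h]

lemma update_none_ne_none (h : c e' ≠ none) (hne : e' ≠ e) : update c e none e' ≠ none := by
  rwa [update_of_ne hne]

lemma IsPartialEdgeColoring.update_none (hc : IsPartialEdgeColoring G c) (e : Sym2 W) :
    IsPartialEdgeColoring G (update c e none) where
  mem_edgeSet h := hc.mem_edgeSet (eq_some_of_update_none h)
  eq_of_eq_some h₁ h₂ :=
    hc.eq_of_eq_some (eq_some_of_update_none h₁) (eq_some_of_update_none h₂)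

lemma Missing.update_none (h : Missing c u a) (e : Sym2 W) : Missing (update c e none) u a :=
  fun v hv => h v (eq_some_of_update_none hv)

lemma Missing.update_some (h : Missing c u a) (hba : b ≠ a) (e : Sym2 W) :
    Missing (update c e (some b)) u a := by
  intro v hv
  rw [update_apply] at hv
  split_ifs at hv
  · exact hba (Option.some_injective _ hv)
  · exact h v hv

lemma Missing.update (h : Missing c u a) (hu : u ∉ e) (o : Option (Fin n)) :
    Missing (update c e o) u a := by
  intro v
  rw [update_of_ne (by rintro rfl; exact hu (Sym2.mem_mk_left u v))]
  exact h v

lemma missing_update_none_self (hc : IsPartialEdgeColoring G c) (h : c s(x, y) = some a) :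
    Missing (update c s(x, y) none) x a := by
  intro v hv
  obtain rfl := hc.eq_of_eq_some (eq_some_of_update_none hv) h
  simp at hv

lemma IsPartialEdgeColoring.update_some (hc : IsPartialEdgeColoring G c) (hxy : G.Adj x y)
    (hx : Missing c x a) (hy : Missing c y a) :
    IsPartialEdgeColoring G (update c s(x, y) (some a)) := by
  have hend : ∀ {u}, u ∈ s(x, y) → Missing c u a := by
    intro u hu
    rcases Sym2.mem_iff.1 hu with rfl | rfl
    exacts [hx, hy]
  refine ⟨fun {e b} h => ?_, fun {u v w b} h₁ h₂ => ?_⟩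
  · rcases eq_or_ne e s(x, y) with rfl | hne
    · exact hxy
    · exact hc.mem_edgeSet (by rwa [update_of_ne hne] at h)
  · rw [update_apply] at h₁ h₂
    split_ifs at h₁ h₂ with hv hw hw
    · exact Sym2.congr_right.1 (hv.trans hw.symm)
    · cases h₁
      exact absurd h₂ (hend (hv ▸ Sym2.mem_mk_left u v) w)
    · cases h₂
      exact absurd h₁ (hend (hw ▸ Sym2.mem_mk_left u w) v)
    · exact hc.eq_of_eq_some h₁ h₂

end Update

section Kempe

def kempeGraph (c : Sym2 W → Option (Fin n)) (a b : Fin n) : SimpleGraph W :=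
  SimpleGraph.fromEdgeSet {e | c e = some a ∨ c e = some b}

lemma deg_kempeGraph_le_two [Finite W] (hc : IsPartialEdgeColoring G c) (u : W) :
    deg (kempeGraph c a b) u ≤ 2 := by
  have hsub : (kempeGraph c a b).neighborSet u ⊆
      {v | c s(u, v) = some a} ∪ {v | c s(u, v) = some b} := fun v hv => hv.1
  have hsing : ∀ d : Fin n, {v | c s(u, v) = some d}.ncard ≤ 1 := fun d =>
    (Set.ncard_le_one_iff).2 fun hv hw => hc.eq_of_eq_some hv hw
  calc deg (kempeGraph c a b) u ≤ _ := Set.ncard_le_ncard hsub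
    _ ≤ _ := Set.ncard_union_le _ _
    _ ≤ 2 := add_le_add (hsing a) (hsing b)

lemma deg_kempeGraph_le_one [Finite W] (hc : IsPartialEdgeColoring G c)
    (hu : Missing c u a ∨ Missing c u b) : deg (kempeGraph c a b) u ≤ 1 := by
  refine (Set.ncard_le_one_iff).2 fun {v w} hv hw => ?_
  rcases hu with hu | hu
  · exact hc.eq_of_eq_some (hv.1.resolve_left (hu v)) (hw.1.resolve_left (hu w))
  · exact hc.eq_of_eq_some (hv.1.resolve_right (hu v)) (hw.1.resolve_right (hu w))

open Classical in
noncomputable def kempeSwap (c : Sym2 W → Option (Fin n)) (a b : Fin n)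
    (C : (kempeGraph c a b).ConnectedComponent) : Sym2 W → Option (Fin n) :=
  fun e => if e ∈ C.supp.sym2 then Equiv.swap (some a) (some b) (c e) else c e

variable {C : (kempeGraph c a b).ConnectedComponent}

lemma kempeSwap_mk_of_notMem (hu : u ∉ C.supp) (v : W) :
    kempeSwap c a b C s(u, v) = c s(u, v) := by
  simp [kempeSwap, hu]

lemma kempeSwap_mk_of_mem (hc : IsPartialEdgeColoring G c) (hu : u ∈ C.supp) (v : W) :
    kempeSwap c a b C s(u, v) = Equiv.swap (some a) (some b) (c s(u, v)) := by
  by_cases hv : v ∈ C.supp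
  · simp [kempeSwap, hu, hv]
  · have hab : ¬ (c s(u, v) = some a ∨ c s(u, v) = some b) := fun h =>
      hv ((C.mem_supp_congr_adj (show (kempeGraph c a b).Adj u v from
        ⟨h, (h.elim hc.adj hc.adj).ne⟩)).1 hu)
    rw [not_or] at hab
    simp [kempeSwap, hv, Equiv.swap_apply_of_ne_of_ne hab.1 hab.2]

lemma kempeSwap_eq_none_iff {e : Sym2 W} : kempeSwap c a b C e = none ↔ c e = none := by
  unfold kempeSwap
  split_ifs
  · rw [Equiv.swap_apply_eq_iff, Equiv.swap_apply_of_ne_of_ne (by simp) (by simp)]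
  · rfl

lemma IsPartialEdgeColoring.kempeSwap (hc : IsPartialEdgeColoring G c) :
    IsPartialEdgeColoring G (kempeSwap c a b C) := by
  refine ⟨fun {e d} h => ?_, fun {u v w d} h₁ h₂ => ?_⟩
  · obtain ⟨d', hd'⟩ := Option.ne_none_iff_exists'.1
      (kempeSwap_eq_none_iff.not.1 (h ▸ Option.some_ne_none d))
    exact hc.mem_edgeSet hd'
  · by_cases hu : u ∈ C.supp
    · rw [kempeSwap_mk_of_mem hc hu, Equiv.swap_apply_eq_iff,
        (Option.some_injective _).swap_apply] at h₁ h₂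
      exact hc.eq_of_eq_some h₁ h₂
    · rw [kempeSwap_mk_of_notMem hu] at h₁ h₂
      exact hc.eq_of_eq_some h₁ h₂

lemma Missing.kempeSwap_of_notMem (h : Missing c u d) (hu : u ∉ C.supp) :
    Missing (kempeSwap c a b C) u d := fun v => by
  rw [kempeSwap_mk_of_notMem hu]
  exact h v

lemma Missing.kempeSwap_of_ne (hc : IsPartialEdgeColoring G c) (h : Missing c u d)
    (ha : d ≠ a) (hb : d ≠ b) : Missing (kempeSwap c a b C) u d := fun v => by
  by_cases hu : u ∈ C.supp
  · rw [kempeSwap_mk_of_mem hc hu, Ne, Equiv.swap_apply_eq_iff,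
      Equiv.swap_apply_of_ne_of_ne (by simpa using ha) (by simpa using hb)]
    exact h v
  · exact h.kempeSwap_of_notMem hu v

lemma Missing.kempeSwap_of_mem (hc : IsPartialEdgeColoring G c) (h : Missing c u b)
    (hu : u ∈ C.supp) : Missing (kempeSwap c a b C) u a := fun v => by
  rw [kempeSwap_mk_of_mem hc hu, Ne, Equiv.swap_apply_eq_iff, Equiv.swap_apply_left]
  exact h v

lemma CanColor.of_kempeSwap {e : Sym2 W} (h : CanColor G (kempeSwap c a b C) e) :
    CanColor G c e := by
  obtain ⟨c', hc', he, hmono⟩ := h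
  exact ⟨c', hc', he, fun e' he' => hmono e' (kempeSwap_eq_none_iff.not.2 he')⟩

end Kempe

section Fan

/-- A fan at `x`: neighbours `f 0, …, f k` of `x` such that the color of `x (f (i + 1))` is
missing at `f i`. -/
structure IsFan (G : SimpleGraph W) (c : Sym2 W → Option (Fin n)) (x : W) (f : ℕ → W)
    (k : ℕ) : Prop where
  adj : ∀ i ≤ k, G.Adj x (f i)
  injOn : Set.InjOn f (Set.Iic k)
  link : ∀ i < k, ∃ b, c s(x, f (i + 1)) = some b ∧ Missing c (f i) b

lemma IsFan.mono (hF : IsFan G c x f k) (hm : m ≤ k) : IsFan G c x f m where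
  adj i hi := hF.adj i (hi.trans hm)
  injOn := hF.injOn.mono (Set.Iic_subset_Iic.2 hm)
  link i hi := hF.link i (hi.trans_le hm)

lemma IsFan.apply_ne {i j : ℕ} (hF : IsFan G c x f k) (hi : i ≤ k) (hj : j ≤ k)
    (hij : i ≠ j) : f i ≠ f j :=
  fun h => hij (hF.injOn hi hj h)

lemma IsFan.center_ne {i : ℕ} (hF : IsFan G c x f k) (hi : i ≤ k) : f i ≠ x :=
  (hF.adj i hi).ne'

lemma IsFan.lt_card [Finite W] (hF : IsFan G c x f k) : k < Nat.card W := by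
  have h := hF.injOn.ncard_image
  rw [Set.ncard_eq_toFinset_card' (Set.Iic k), Set.toFinset_Iic, Nat.card_Iic] at h
  have := Set.ncard_le_card (f '' Set.Iic k)
  omega

lemma exists_maximal_fan [Finite W] (hc : IsPartialEdgeColoring G c) (hxy : G.Adj x y) :
    ∃ f k, IsFan G c x f k ∧ f 0 = y ∧
      ∀ z b, c s(x, z) = some b → Missing c (f k) b → ∃ j ≤ k, f j = z := by
  classical
  let P k := ∃ f, IsFan G c x f k ∧ f 0 = y
  have hP0 : P 0 :=
    ⟨fun _ => y, ⟨by simpa using hxy, fun i hi j hj _ => by simp_all, by simp⟩, rfl⟩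
  set K := Nat.findGreatest P (Nat.card W)
  obtain ⟨f, hF, hf0⟩ : P K := Nat.findGreatest_spec (Nat.zero_le _) hP0
  refine ⟨f, K, hF, hf0, fun z b hz hb => ?_⟩
  by_contra! hzf
  let g i := if i ≤ K then f i else z
  have hg : IsFan G c x g (K + 1) := by
    refine ⟨fun i hi => ?_, fun i hi j hj hij => ?_, fun i hi => ?_⟩
    · by_cases h : i ≤ K
      · simpa [g, h] using hF.adj i h
      · simpa [g, h] using hc.adj hz
    · simp only [Set.mem_Iic] at hi hj
      by_cases h₁ : i ≤ K <;> by_cases h₂ : j ≤ K <;>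
        simp only [g, h₁, h₂, if_true, if_false] at hij
      · exact hF.injOn h₁ h₂ hij
      · exact absurd hij (hzf i h₁)
      · exact absurd hij.symm (hzf j h₂)
      · omega
    · by_cases h : i + 1 ≤ K
      · simpa [g, h, show i ≤ K by omega] using hF.link i h
      · obtain rfl : i = K := by omega
        exact ⟨b, by simpa [g] using hz, by simpa [g] using hb⟩
  exact Nat.findGreatest_is_greatest (Nat.lt_succ_self K) hg.lt_card.le
    ⟨g, hg, by simp [g, hf0]⟩

variable [DecidableEq W]

lemma IsFan.shift (hF : IsFan G c x f (k + 1)) (b : Fin n) :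
    IsFan G (update (update c s(x, f 1) none) s(x, f 0) (some b)) x (fun i => f (i + 1)) k where
  adj i hi := hF.adj (i + 1) (by omega)
  injOn i hi j hj h := by
    simpa using hF.injOn (show i + 1 ≤ k + 1 by simp_all) (show j + 1 ≤ k + 1 by simp_all) h
  link i hi := by
    obtain ⟨d, hd, hmiss⟩ := hF.link (i + 1) (by omega)
    refine ⟨d, ?_, (hmiss.update_none _).update ?_ _⟩
    · have hne : ∀ j ≤ 1, s(x, f (i + 2)) ≠ s(x, f j) := fun j hj h =>
        hF.apply_ne (by omega) (by omega) (by omega) (Sym2.congr_right.1 h)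
      rwa [update_of_ne (hne 0 (by omega)), update_of_ne (hne 1 le_rfl)]
    · rw [Sym2.mem_iff, not_or]
      exact ⟨hF.center_ne (by omega), hF.apply_ne (by omega) (by omega) (by omega)⟩

lemma IsFan.canColor (hc : IsPartialEdgeColoring G c) (hF : IsFan G c x f k)
    (h0 : c s(x, f 0) = none) (hx : Missing c x a) (hk : Missing c (f k) a) :
    CanColor G c s(x, f 0) := by
  induction k generalizing c f with
  | zero =>
    refine ⟨update c s(x, f 0) (some a), hc.update_some (hF.adj 0 le_rfl) hx hk, by simp,
      fun e he => update_some_ne_none he⟩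
  | succ k ih =>
    obtain ⟨b, h1, hb⟩ := hF.link 0 (by omega)
    have h01 : s(x, f 0) ≠ s(x, f 1) := fun h =>
      hF.apply_ne (i := 0) (j := 1) (by omega) (by omega) (by omega) (Sym2.congr_right.1 h)
    set c₁ := update (update c s(x, f 1) none) s(x, f 0) (some b)
    have hc₁ : IsPartialEdgeColoring G c₁ :=
      (hc.update_none _).update_some (hF.adj 0 (by omega)) (missing_update_none_self hc h1)
        (hb.update_none _)
    have hkx : f (k + 1) ∉ s(x, f 0) := by
      rw [Sym2.mem_iff, not_or]
      exact ⟨hF.center_ne le_rfl, hF.apply_ne le_rfl (by omega) (by omega)⟩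
    obtain ⟨c', hc', hne, hmono⟩ := ih hc₁ (hF.shift b)
      (by simp [c₁, update_of_ne h01.symm])
      ((hx.update_none _).update_some (hx.ne h1) _) ((hk.update_none _).update hkx _)
    refine ⟨c', hc', hmono _ (by simp [c₁]), fun e he => ?_⟩
    by_cases he1 : e = s(x, f 1)
    · exact he1 ▸ hne
    · exact hmono e (update_some_ne_none (update_none_ne_none he he1))

/-- Interchange `α` and `β` on the Kempe chain through `f m`: the fan survives, and `α` becomes
missing at both `x` and `f m`. -/
lemma IsFan.canColor_of_kempe (hc : IsPartialEdgeColoring G c) (hF : IsFan G c x f m)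
    (h0 : c s(x, f 0) = none) (hα : Missing c x α) (hβ : Missing c (f m) β)
    (hx : ¬ (kempeGraph c α β).Reachable (f m) x)
    (hsrc : ∀ i < m, c s(x, f (i + 1)) = some β →
      ¬ (kempeGraph c α β).Reachable (f m) (f i)) :
    CanColor G c s(x, f 0) := by
  set C := (kempeGraph c α β).connectedComponentMk (f m)
  have hreach : ∀ {w}, w ∈ C.supp → (kempeGraph c α β).Reachable (f m) w :=
    C.reachable_of_mem_supp ConnectedComponent.connectedComponentMk_mem
  have hxC : x ∉ C.supp := fun h => hx (hreach h)
  have hF' : IsFan G (kempeSwap c α β C) x f m := by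
    refine ⟨hF.adj, hF.injOn, fun i hi => ?_⟩
    obtain ⟨d, hd, hmiss⟩ := hF.link i hi
    refine ⟨d, by rwa [kempeSwap_mk_of_notMem hxC], ?_⟩
    by_cases hiC : f i ∈ C.supp
    · have hdβ : d ≠ β := by
        rintro rfl
        exact hsrc i hi hd (hreach hiC)
      exact hmiss.kempeSwap_of_ne hc (hα.ne hd) hdβ
    · exact hmiss.kempeSwap_of_notMem hiC
  refine CanColor.of_kempeSwap (hF'.canColor hc.kempeSwap ?_ (hα.kempeSwap_of_notMem hxC)
    (hβ.kempeSwap_of_mem hc ConnectedComponent.connectedComponentMk_mem))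
  rwa [kempeSwap_mk_of_notMem hxC]

lemma canColor_of_deg_lt [Finite W] (hdeg : ∀ w, deg G w < n) (hc : IsPartialEdgeColoring G c)
    (hxy : G.Adj x y) (hnone : c s(x, y) = none) : CanColor G c s(x, y) := by
  obtain ⟨f, k, hF, rfl, hmax⟩ := exists_maximal_fan hc hxy
  obtain ⟨β, hβ⟩ := exists_missing hc (hdeg (f k))
  obtain ⟨α, hα⟩ := exists_missing hc (hdeg x)
  by_cases hxβ : Missing c x β
  · exact hF.canColor hc hnone hxβ hβ
  obtain ⟨z, hz⟩ : ∃ z, c s(x, z) = some β := by simpa [Missing] using hxβ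
  obtain ⟨j, hjk, rfl⟩ := hmax z β hz hβ
  obtain ⟨i, rfl⟩ : ∃ i, j = i + 1 :=
    Nat.exists_eq_succ_of_ne_zero (by rintro rfl; simp [hnone] at hz)
  have hiβ : Missing c (f i) β := by
    obtain ⟨b, hb, hmiss⟩ := hF.link i hjk
    rw [hz, Option.some_inj] at hb
    exact hb ▸ hmiss
  have hsame : ∀ i' < k, c s(x, f (i' + 1)) = some β → i' = i := fun i' hi' h => by
    have := hF.injOn (show i' + 1 ≤ k by omega) hjk (hc.eq_of_eq_some h hz)
    omega
  by_cases hA : (kempeGraph c α β).Reachable x (f i)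
  · have hk : ¬ (kempeGraph c α β).Reachable x (f k) :=
      not_reachable_of_deg_le_one (deg_kempeGraph_le_two hc) (hF.center_ne (by omega)).symm
        (hF.center_ne le_rfl).symm (hF.apply_ne (by omega) le_rfl (by omega))
        (deg_kempeGraph_le_one hc (.inl hα)) (deg_kempeGraph_le_one hc (.inr hiβ))
        (deg_kempeGraph_le_one hc (.inr hβ)) hA
    refine hF.canColor_of_kempe hc hnone hα hβ (fun h => hk h.symm) fun i' hi' h hr => hk ?_
    obtain rfl := hsame i' hi' h
    exact hA.trans hr.symm
  · refine (hF.mono (by omega)).canColor_of_kempe hc hnone hα hiβ (fun h => hA h.symm)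
      fun i' hi' h => absurd (hsame i' (by omega) h) (by omega)

end Fan

lemma exists_total_partialEdgeColoring [Finite W] (hdeg : ∀ w, deg G w < n) :
    ∃ c : Sym2 W → Option (Fin n), IsPartialEdgeColoring G c ∧
      ∀ e ∈ G.edgeSet, c e ≠ none := by
  classical
  have := Fintype.ofFinite W
  obtain ⟨c, hc, hmax⟩ := exists_max_image {c | IsPartialEdgeColoring G c}.toFinset
    (fun c => #{e | c e ≠ none})
    ⟨fun _ => none, Set.mem_toFinset.2 ⟨nofun, nofun⟩⟩
  rw [Set.mem_toFinset] at hc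
  refine ⟨c, hc, fun e he => ?_⟩
  induction e using Sym2.ind with | _ x y => ?_
  by_contra hnone
  obtain ⟨c', hc', hxy, hmono⟩ := canColor_of_deg_lt hdeg hc he hnone
  have hlt : #{e | c e ≠ none} < #{e | c' e ≠ none} := by
    refine Finset.card_lt_card ⟨fun e => by simpa using hmono e, fun hsub => ?_⟩
    simpa [hnone, hxy] using hsub (x := s(x, y))
  exact (hmax c' (Set.mem_toFinset.2 hc')).not_gt hlt

lemma IsPartialEdgeColoring.isProperEdgeColoring_getD (hc : IsPartialEdgeColoring G c)
    (htotal : ∀ e ∈ G.edgeSet, c e ≠ none) (d : Fin n) :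
    IsProperEdgeColoring G fun e => (c e).getD d := by
  rintro e₁ he₁ e₂ he₂ hne ⟨v, hv₁, hv₂⟩ heq
  obtain ⟨w₁, rfl⟩ := Sym2.mem_iff_exists.1 hv₁
  obtain ⟨w₂, rfl⟩ := Sym2.mem_iff_exists.1 hv₂
  obtain ⟨a₁, ha₁⟩ := Option.ne_none_iff_exists'.1 (htotal _ he₁)
  obtain ⟨a₂, ha₂⟩ := Option.ne_none_iff_exists'.1 (htotal _ he₂)
  simp only [ha₁, ha₂, Option.getD_some] at heq
  exact hne (by rw [hc.eq_of_eq_some ha₁ (heq ▸ ha₂)])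

end Vizing

/-- Vizing's theorem. -/
theorem exists_isProperEdgeColoring_of_deg_lt {W : Type*} [Finite W] {n : ℕ}
    (G : SimpleGraph W) (hdeg : ∀ w, deg G w < n) :
    ∃ C : Sym2 W → Fin n, IsProperEdgeColoring G C := by
  rcases isEmpty_or_nonempty W with hW | ⟨⟨w⟩⟩
  · exact ⟨isEmptyElim, fun e => isEmptyElim e⟩
  obtain ⟨c, hc, htotal⟩ := Vizing.exists_total_partialEdgeColoring hdeg
  exact ⟨_, hc.isProperEdgeColoring_getD htotal ⟨0, (Nat.zero_le _).trans_lt (hdeg w)⟩⟩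

section ChromaticIndex

variable {V : Type*} {G : SimpleGraph V} {k : ℕ}

lemma deg_le_maxDeg [Finite V] (G : SimpleGraph V) (v : V) : deg G v ≤ maxDeg G :=
  le_csSup (Set.finite_range _).bddAbove ⟨v, rfl⟩

lemma deg_le_of_isProperEdgeColoring {C : Sym2 V → Fin k} (hC : IsProperEdgeColoring G C)
    (v : V) : deg G v ≤ k := by
  have hinj : Function.Injective fun w : G.neighborSet v => C s(v, w) := by
    rintro ⟨w, hw⟩ ⟨w', hw'⟩ h
    by_contra hne
    exact hC _ hw _ hw' (fun he => hne (Subtype.ext (Sym2.congr_right.1 he)))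
      ⟨v, Sym2.mem_mk_left _ _, Sym2.mem_mk_left _ _⟩ h
  simpa [deg, Nat.card_coe_set_eq] using Nat.card_le_card_of_injective _ hinj

lemma chromIndex_le {C : Sym2 V → Fin k} (hC : IsProperEdgeColoring G C) : chromIndex G ≤ k :=
  Nat.sInf_le ⟨C, hC⟩

lemma exists_isProperEdgeColoring_chromIndex [Finite V] (G : SimpleGraph V) :
    ∃ C : Sym2 V → Fin (chromIndex G), IsProperEdgeColoring G C := by
  have := Fintype.ofFinite (Sym2 V)
  exact Nat.sInf_mem (s := {k | ∃ C : Sym2 V → Fin k, IsProperEdgeColoring G C})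
    ⟨_, Fintype.equivFin (Sym2 V),
    fun _ _ _ _ hne _ h => hne ((Fintype.equivFin _).injective h)⟩

lemma maxDeg_le_chromIndex [Finite V] (G : SimpleGraph V) : maxDeg G ≤ chromIndex G := by
  obtain ⟨C, hC⟩ := exists_isProperEdgeColoring_chromIndex G
  exact csSup_le' (Set.forall_mem_range.2 (deg_le_of_isProperEdgeColoring hC))

lemma ClassI.exists_isProperEdgeColoring [Finite V] (hG : ClassI G) (hk : maxDeg G ≤ k) :
    ∃ C : Sym2 V → Fin k, IsProperEdgeColoring G C := by
  obtain ⟨C, hC⟩ := exists_isProperEdgeColoring_chromIndex G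
  refine ⟨Fin.castLE (hG ▸ hk) ∘ C, fun e₁ he₁ e₂ he₂ hne hv h => ?_⟩
  exact hC e₁ he₁ e₂ he₂ hne hv (Fin.castLE_injective _ h)

end ChromaticIndex

section Truncation

variable {V : Type*} {X : SimpleGraph V} {H : SimpleGraph X.Dart} {d d' : X.Dart} {m : ℕ}

instance [Finite V] : Finite X.Dart := Finite.of_injective _ Dart.toProd_injective

lemma trunc_adj_iff : (trunc X H).Adj d d' ↔ d' = d.symm ∨ H.Adj d d' := by
  rw [trunc, fromRel_adj]
  constructor
  · rintro ⟨-, h | rfl | h⟩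
    · exact h
    · exact .inl d'.symm_symm.symm
    · exact .inr h.symm
  · rintro (rfl | h)
    · exact ⟨fun h => d.symm_ne h.symm, .inl (.inl rfl)⟩
    · exact ⟨h.ne, .inl (.inr h)⟩

lemma deg_trunc [Finite V] (hH : RespectsClusters X H) (d : X.Dart) :
    deg (trunc X H) d = deg H d + 1 := by
  have hnbr : (trunc X H).neighborSet d = insert d.symm (H.neighborSet d) := by
    ext d'
    simp [trunc_adj_iff]
  rw [deg, hnbr, Set.ncard_insert_of_notMem, deg]
  exact fun h => d.fst_ne_snd (by simpa using hH d d.symm h)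

lemma deg_constituent (hH : RespectsClusters X H) {v : V} (d : cluster X v) :
    deg (constituent X H v) d = deg H d :=
  deg_induce_of_neighborSet_subset d fun d' hd' => (hH d d' hd').symm.trans d.2

/-- Color the constituent edges at `v` by `E v` and the matching edges by the extra color
`Fin.last m`; the vertex `v` is read off an arbitrary endpoint of the edge. -/
noncomputable def truncColoring (E : ∀ v, Sym2 (cluster X v) → Fin m) (e : Sym2 X.Dart) :
    Fin (m + 1) :=
  Function.extend (Sym2.map ((↑) : cluster X e.out.1.toProd.1 → X.Dart))
    (Fin.castSucc ∘ E e.out.1.toProd.1) (fun _ => Fin.last m) e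

variable {E : ∀ v, Sym2 (cluster X v) → Fin m}

lemma truncColoring_mk_of_adj (hH : RespectsClusters X H) (h : H.Adj d d') :
    ∃ v, ∃ (hd : d.toProd.1 = v) (hd' : d'.toProd.1 = v),
      truncColoring E s(d, d') = (E v s(⟨d, hd⟩, ⟨d', hd'⟩)).castSucc := by
  have hout : s(d, d').out.1.toProd.1 = d.toProd.1 := by
    rcases Sym2.mem_iff.1 (Sym2.out_fst_mem s(d, d')) with h' | h'
    · rw [h']
    · rw [h', hH d d' h]
  refine ⟨_, hout.symm, (hH d d' h).symm.trans hout.symm, ?_⟩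
  exact (Sym2.map.injective Subtype.val_injective).extend_apply _ _ s(⟨d, _⟩, ⟨d', _⟩)

lemma truncColoring_mk_symm (E : ∀ v, Sym2 (cluster X v) → Fin m) (d : X.Dart) :
    truncColoring E s(d, d.symm) = Fin.last m := by
  refine Function.extend_apply' _ _ _ ?_
  rintro ⟨p, hp⟩
  have hfst : ∀ d'' ∈ s(d, d.symm), d''.toProd.1 = s(d, d.symm).out.1.toProd.1 := by
    intro d'' hd''
    obtain ⟨a, -, rfl⟩ := Sym2.mem_map.1 (hp ▸ hd'')
    exact a.2
  exact d.fst_ne_snd ((hfst d (Sym2.mem_mk_left _ _)).trans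
    (hfst d.symm (Sym2.mem_mk_right _ _)).symm)

lemma isProperEdgeColoring_truncColoring (hH : RespectsClusters X H)
    (hE : ∀ v, IsProperEdgeColoring (constituent X H v) (E v)) :
    IsProperEdgeColoring (trunc X H) (truncColoring E) := by
  rintro e₁ he₁ e₂ he₂ hne ⟨u, hu₁, hu₂⟩
  obtain ⟨b₁, rfl⟩ := Sym2.mem_iff_exists.1 hu₁
  obtain ⟨b₂, rfl⟩ := Sym2.mem_iff_exists.1 hu₂
  rcases trunc_adj_iff.1 ((trunc X H).mem_edgeSet.1 he₁) with rfl | h₁ <;>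
    rcases trunc_adj_iff.1 ((trunc X H).mem_edgeSet.1 he₂) with rfl | h₂
  · exact absurd rfl hne
  · obtain ⟨v, _, _, h⟩ := truncColoring_mk_of_adj (E := E) hH h₂
    rw [truncColoring_mk_symm, h]
    exact (Fin.castSucc_ne_last _).symm
  · obtain ⟨v, _, _, h⟩ := truncColoring_mk_of_adj (E := E) hH h₁
    rw [truncColoring_mk_symm, h]
    exact Fin.castSucc_ne_last _
  · obtain ⟨v, rfl, hb₁, e₁⟩ := truncColoring_mk_of_adj (E := E) hH h₁
    obtain ⟨v', hv', hb₂, e₂⟩ := truncColoring_mk_of_adj (E := E) hH h₂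
    subst hv'
    rw [e₁, e₂, Ne, Fin.castSucc_inj]
    refine hE _ _ h₁ _ h₂ (fun h => hne ?_)
      ⟨⟨u, rfl⟩, Sym2.mem_mk_left _ _, Sym2.mem_mk_left _ _⟩
    simpa using congrArg (Sym2.map Subtype.val) h

lemma exists_isProperEdgeColoring_constituent [Finite V] (hH : RespectsClusters X H)
    (hcon : ∀ v : V,
      (∃ d : X.Dart, d.toProd.1 = v ∧ deg (trunc X H) d = maxDeg (trunc X H)) →
      ClassI (constituent X H v))
    (hm : maxDeg (trunc X H) = m + 1) (v : V) :
    ∃ E : Sym2 (cluster X v) → Fin m, IsProperEdgeColoring (constituent X H v) E := by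
  have hle : ∀ d : X.Dart, deg H d ≤ m := fun d => by
    have := deg_le_maxDeg (trunc X H) d
    rw [deg_trunc hH, hm] at this
    omega
  by_cases hmax : ∃ d : X.Dart, d.toProd.1 = v ∧ deg (trunc X H) d = maxDeg (trunc X H)
  · refine (hcon v hmax).exists_isProperEdgeColoring (csSup_le' ?_)
    rintro _ ⟨d, rfl⟩
    exact (deg_constituent hH d).trans_le (hle d)
  · refine exists_isProperEdgeColoring_of_deg_lt _ fun d => ?_
    have hne := mt (fun h => ⟨d.1, d.2, h⟩) hmax
    rw [deg_trunc hH, hm] at hne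
    rw [deg_constituent hH]
    exact lt_of_le_of_ne (hle d) (by omega)

end Truncation

theorem stmt14_general {V : Type*} [Fintype V] (X : SimpleGraph V)
    (H : SimpleGraph X.Dart) (hH : RespectsClusters X H)
    (hcon : ∀ v : V,
      (∃ d : X.Dart, d.toProd.1 = v ∧ deg (trunc X H) d = maxDeg (trunc X H)) →
      ClassI (constituent X H v)) :
    ClassI (trunc X H) := by
  refine le_antisymm ?_ (maxDeg_le_chromIndex _)
  rcases isEmpty_or_nonempty X.Dart with hD | ⟨⟨d⟩⟩
  · exact (chromIndex_le (C := isEmptyElim) fun e => isEmptyElim e).trans (Nat.zero_le _)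
  obtain ⟨m, hm⟩ : ∃ m, maxDeg (trunc X H) = m + 1 := by
    have := deg_le_maxDeg (trunc X H) d
    rw [deg_trunc hH] at this
    exact Nat.exists_eq_add_one.2 (by omega)
  choose E hE using exists_isProperEdgeColoring_constituent hH hcon hm
  rw [hm]
  exact chromIndex_le (isProperEdgeColoring_truncColoring hH hE)

/-- if every constituent containing a vertex of maximum degree of the
truncation is class I, then the truncation is class I. -/
theorem stmt14 {V : Type*} [Fintype V] (X : SimpleGraph V) (hX : NoIsolated X)
    (H : SimpleGraph X.Dart) (hH : RespectsClusters X H)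
    (hcon : ∀ v : V,
      (∃ d : X.Dart, d.toProd.1 = v ∧ deg (trunc X H) d = maxDeg (trunc X H)) →
      ClassI (constituent X H v)) :
    ClassI (trunc X H) :=
  stmt14_general X H hH hcon
end
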